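/- arXiv:2503.15830 — 3 statements merged into one kernel-verified Lean document; each statement's English description precedes it below -/
import Mathlib

section
/- The geodesic (arc-length) distance d_R(q₁,q₂) = arccos(∬ q₁ q₂ dx dy) between unit-norm half-densities is invariant under simultaneous warping: d_R((q₁*γ),(q₂*γ)) = d_R(q₁,q₂). -/
open MeasureTheory Set

/-- γ is a boundary-preserving C¹ diffeomorphism of [0,1] with derivative γ' positive. -/
def IsDiffeo01 (γ γ' : ℝ → ℝ) : Prop :=
  γ 0 = 0 ∧ γ 1 = 1 ∧ Set.BijOn γ (Set.Icc 0 1) (Set.Icc 0 1) ∧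
  (∀ x ∈ Set.Icc (0:ℝ) 1, HasDerivAt γ (γ' x) x) ∧
  ContinuousOn γ' (Set.Icc 0 1) ∧
  (∀ x ∈ Set.Icc (0:ℝ) 1, 0 < γ' x)

/-- The warping action on half-densities. -/
noncomputable def warpQ (q : ℝ → ℝ → ℝ) (γ γ' : ℝ → ℝ) (x y : ℝ) : ℝ :=
  q (γ x) (γ y) * Real.sqrt (γ' x) * Real.sqrt (γ' y)


/-- The geodesic (arc-length) distance between half-densities. -/
noncomputable def dR (q₁ q₂ : ℝ → ℝ → ℝ) : ℝ :=
  Real.arccos (∫ x in Set.Icc (0:ℝ) 1, ∫ y in Set.Icc (0:ℝ) 1, q₁ x y * q₂ x y)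

/-!
The integrand of the warped inner product is `γ' x * γ' y * (q₁ * q₂) (γ x, γ y)`, so the inner
product is unchanged by one change of variables `v = γ y` in the inner integral followed by one
`u = γ x` in the outer one.
-/

theorem integral_image_eq_integral_deriv_smul_of_pos {E : Type*} [NormedAddCommGroup E]
    [NormedSpace ℝ E] {s : Set ℝ} {f f' : ℝ → ℝ} (hs : MeasurableSet s)
    (hf' : ∀ x ∈ s, HasDerivWithinAt f (f' x) s x) (hf : InjOn f s) (hpos : ∀ x ∈ s, 0 < f' x)
    (g : ℝ → E) : ∫ x in f '' s, g x = ∫ x in s, f' x • g (f x) := by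
  rw [integral_image_eq_integral_abs_deriv_smul hs hf' hf g]
  exact setIntegral_congr_fun hs fun x hx => by rw [abs_of_pos (hpos x hx)]

theorem IsDiffeo01.integral_deriv_mul_comp {γ γ' : ℝ → ℝ} (hγ : IsDiffeo01 γ γ') (g : ℝ → ℝ) :
    ∫ x in Icc (0 : ℝ) 1, γ' x * g (γ x) = ∫ u in Icc (0 : ℝ) 1, g u := by
  obtain ⟨-, -, hbij, hderiv, -, hpos⟩ := hγ
  simpa only [hbij.image_eq, smul_eq_mul] using (integral_image_eq_integral_deriv_smul_of_pos
    measurableSet_Icc (fun x hx => (hderiv x hx).hasDerivWithinAt) hbij.injOn hpos g).symm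

theorem warpQ_mul_warpQ (q₁ q₂ : ℝ → ℝ → ℝ) {γ γ' : ℝ → ℝ} {x y : ℝ} (hx : 0 ≤ γ' x)
    (hy : 0 ≤ γ' y) :
    warpQ q₁ γ γ' x y * warpQ q₂ γ γ' x y
      = γ' x * (γ' y * (q₁ (γ x) (γ y) * q₂ (γ x) (γ y))) := by
  calc warpQ q₁ γ γ' x y * warpQ q₂ γ γ' x y
      = (√(γ' x) * √(γ' x)) * ((√(γ' y) * √(γ' y)) * (q₁ (γ x) (γ y) * q₂ (γ x) (γ y))) := by
        simp only [warpQ]; ring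
    _ = γ' x * (γ' y * (q₁ (γ x) (γ y) * q₂ (γ x) (γ y))) := by
        rw [Real.mul_self_sqrt hx, Real.mul_self_sqrt hy]

theorem IsDiffeo01.integral_integral_warpQ_mul_warpQ {γ γ' : ℝ → ℝ} (hγ : IsDiffeo01 γ γ')
    (q₁ q₂ : ℝ → ℝ → ℝ) :
    ∫ x in Icc (0 : ℝ) 1, ∫ y in Icc (0 : ℝ) 1, warpQ q₁ γ γ' x y * warpQ q₂ γ γ' x y
      = ∫ x in Icc (0 : ℝ) 1, ∫ y in Icc (0 : ℝ) 1, q₁ x y * q₂ x y := by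
  obtain ⟨-, -, -, -, -, hpos⟩ := id hγ
  have inner (x : ℝ) (hx : x ∈ Icc (0 : ℝ) 1) :
      ∫ y in Icc (0 : ℝ) 1, warpQ q₁ γ γ' x y * warpQ q₂ γ γ' x y
        = γ' x * ∫ v in Icc (0 : ℝ) 1, q₁ (γ x) v * q₂ (γ x) v := by
    rw [← hγ.integral_deriv_mul_comp fun v => q₁ (γ x) v * q₂ (γ x) v, ← integral_const_mul]
    exact setIntegral_congr_fun measurableSet_Icc fun y hy =>
      warpQ_mul_warpQ q₁ q₂ (hpos x hx).le (hpos y hy).le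
  rw [setIntegral_congr_fun measurableSet_Icc inner,
    hγ.integral_deriv_mul_comp fun u => ∫ v in Icc (0 : ℝ) 1, q₁ u v * q₂ u v]

theorem dR_warping_invariant_general
    (q₁ q₂ : ℝ → ℝ → ℝ) (γ γ' : ℝ → ℝ) (hγ : IsDiffeo01 γ γ') :
    dR (warpQ q₁ γ γ') (warpQ q₂ γ γ') = dR q₁ q₂ := by
  rw [dR, dR, hγ.integral_integral_warpQ_mul_warpQ]

theorem dR_warping_invariant
    (q₁ q₂ : ℝ → ℝ → ℝ) (γ γ' : ℝ → ℝ) (hγ : IsDiffeo01 γ γ')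
    (h₁ : IntegrableOn (fun p : ℝ × ℝ => (q₁ p.1 p.2) ^ 2) (Set.Icc 0 1 ×ˢ Set.Icc 0 1))
    (h₂ : IntegrableOn (fun p : ℝ × ℝ => (q₂ p.1 p.2) ^ 2) (Set.Icc 0 1 ×ˢ Set.Icc 0 1))
    (hm₁ : Measurable (fun p : ℝ × ℝ => q₁ p.1 p.2))
    (hm₂ : Measurable (fun p : ℝ × ℝ => q₂ p.1 p.2))
    (hn₁ : ∀ x y : ℝ, 0 ≤ q₁ x y) (hn₂ : ∀ x y : ℝ, 0 ≤ q₂ x y)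
    (hu₁ : ∫ x in Set.Icc (0:ℝ) 1, ∫ y in Set.Icc (0:ℝ) 1, (q₁ x y) ^ 2 = 1)
    (hu₂ : ∫ x in Set.Icc (0:ℝ) 1, ∫ y in Set.Icc (0:ℝ) 1, (q₂ x y) ^ 2 = 1) :
    dR (warpQ q₁ γ γ') (warpQ q₂ γ γ') = dR q₁ q₂ :=
  dR_warping_invariant_general q₁ q₂ γ γ' hγ
end

section
/- The directional derivative of the energy H(γ) = ‖q₁ − (q₂*γ)‖²_{L²} at the identity in direction b equals −2⟨q₁ − q₂, dΦ_{id}(b)⟩, where dΦ_{id}(b)(x,y) = ∂q₂/∂x·b(x) + ∂q₂/∂y·b(y) + (q₂(x,y)/2)(b'(x)+b'(y)). -/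
open MeasureTheory Set

/-- The Gateaux derivative field dΦ_{id}(b) for the half-density q₂. -/
noncomputable def dPhi (q₂ : ℝ × ℝ → ℝ) (b : ℝ → ℝ) (x y : ℝ) : ℝ :=
  fderiv ℝ q₂ (x, y) (b x, b y) + q₂ (x, y) / 2 * (deriv b x + deriv b y)

/-- The warped half-density as a function of the parameter `t`. -/
noncomputable def Gq (q₂ : ℝ × ℝ → ℝ) (b : ℝ → ℝ) (t : ℝ) (p : ℝ × ℝ) : ℝ :=
  q₂ (p.1 + t * b p.1, p.2 + t * b p.2) * Real.sqrt (1 + t * deriv b p.1) *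
    Real.sqrt (1 + t * deriv b p.2)

/-- The `t`-derivative of `Gq`. -/
noncomputable def Gq' (q₂ : ℝ × ℝ → ℝ) (b : ℝ → ℝ) (t : ℝ) (p : ℝ × ℝ) : ℝ :=
  (fderiv ℝ q₂ (p.1 + t * b p.1, p.2 + t * b p.2) (b p.1, b p.2) *
      Real.sqrt (1 + t * deriv b p.1) +
    q₂ (p.1 + t * b p.1, p.2 + t * b p.2) *
      (deriv b p.1 / (2 * Real.sqrt (1 + t * deriv b p.1)))) *
    Real.sqrt (1 + t * deriv b p.2) +
  q₂ (p.1 + t * b p.1, p.2 + t * b p.2) * Real.sqrt (1 + t * deriv b p.1) *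
    (deriv b p.2 / (2 * Real.sqrt (1 + t * deriv b p.2)))

/-- The integrand of the energy. -/
noncomputable def Fq (q₁ q₂ : ℝ × ℝ → ℝ) (b : ℝ → ℝ) (t : ℝ) (p : ℝ × ℝ) : ℝ :=
  (q₁ p - Gq q₂ b t p) ^ 2

/-- The `t`-derivative of the integrand. -/
noncomputable def Fq' (q₁ q₂ : ℝ × ℝ → ℝ) (b : ℝ → ℝ) (t : ℝ) (p : ℝ × ℝ) : ℝ :=
  -2 * (q₁ p - Gq q₂ b t p) * Gq' q₂ b t p

lemma hasDerivAt_Gq (q₂ : ℝ × ℝ → ℝ) (hq₂ : ContDiff ℝ 1 q₂) (b : ℝ → ℝ)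
    (t : ℝ) (p : ℝ × ℝ) (h1 : (1:ℝ) + t * deriv b p.1 ≠ 0)
    (h2 : (1:ℝ) + t * deriv b p.2 ≠ 0) :
    HasDerivAt (fun s => Gq q₂ b s p) (Gq' q₂ b t p) t := by
  have hx : HasDerivAt (fun s : ℝ => p.1 + s * b p.1) (b p.1) t := by
    simpa using ((hasDerivAt_id t).mul_const (b p.1)).const_add p.1
  have hy : HasDerivAt (fun s : ℝ => p.2 + s * b p.2) (b p.2) t := by
    simpa using ((hasDerivAt_id t).mul_const (b p.2)).const_add p.2
  have hq : HasDerivAt (fun s : ℝ => q₂ (p.1 + s * b p.1, p.2 + s * b p.2))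
      (fderiv ℝ q₂ (p.1 + t * b p.1, p.2 + t * b p.2) (b p.1, b p.2)) t :=
    ((hq₂.differentiable one_ne_zero _).hasFDerivAt).comp_hasDerivAt t (hx.prodMk hy)
  have hs1 : HasDerivAt (fun s : ℝ => Real.sqrt (1 + s * deriv b p.1))
      (deriv b p.1 / (2 * Real.sqrt (1 + t * deriv b p.1))) t := by
    have h : HasDerivAt (fun s : ℝ => 1 + s * deriv b p.1) (deriv b p.1) t := by
      simpa using ((hasDerivAt_id t).mul_const (deriv b p.1)).const_add 1
    exact h.sqrt h1
  have hs2 : HasDerivAt (fun s : ℝ => Real.sqrt (1 + s * deriv b p.2))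
      (deriv b p.2 / (2 * Real.sqrt (1 + t * deriv b p.2))) t := by
    have h : HasDerivAt (fun s : ℝ => 1 + s * deriv b p.2) (deriv b p.2) t := by
      simpa using ((hasDerivAt_id t).mul_const (deriv b p.2)).const_add 1
    exact h.sqrt h2
  exact (hq.mul hs1).mul hs2

lemma hasDerivAt_Fq (q₁ q₂ : ℝ × ℝ → ℝ) (hq₂ : ContDiff ℝ 1 q₂) (b : ℝ → ℝ)
    (t : ℝ) (p : ℝ × ℝ) (h1 : (1:ℝ) + t * deriv b p.1 ≠ 0)
    (h2 : (1:ℝ) + t * deriv b p.2 ≠ 0) :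
    HasDerivAt (fun s => Fq q₁ q₂ b s p) (Fq' q₁ q₂ b t p) t := by
  have h := ((hasDerivAt_const t (q₁ p)).sub (hasDerivAt_Gq q₂ hq₂ b t p h1 h2)).pow 2
  convert h using 1
  · rfl
  · rfl
  · rfl
  unfold Fq'
  push_cast
  simp only [Pi.sub_apply]
  ring

set_option maxHeartbeats 2000000 in
/-- H(0) = −2⟨q₁ − q₂, dΦ_{id}(b)⟩ for H(t) = ‖q₁ − (q₂*γ_t)‖² with γ_t = id + t·b. -/
theorem energy_directional_derivative
    (q₁ q₂ : ℝ × ℝ → ℝ) (hq₁ : ContDiff ℝ 1 q₁) (hq₂ : ContDiff ℝ 1 q₂)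
    (b : ℝ → ℝ) (hb : ContDiff ℝ (⊤ : ℕ∞) b) (hb0 : b 0 = 0) (hb1 : b 1 = 0) :
    HasDerivAt
      (fun t : ℝ =>
        ∫ x in Set.Icc (0:ℝ) 1, ∫ y in Set.Icc (0:ℝ) 1,
          (q₁ (x, y) -
            q₂ (x + t * b x, y + t * b y) *
              Real.sqrt (1 + t * deriv b x) * Real.sqrt (1 + t * deriv b y)) ^ 2)
      (-2 * ∫ x in Set.Icc (0:ℝ) 1, ∫ y in Set.Icc (0:ℝ) 1,
          (q₁ (x, y) - q₂ (x, y)) * dPhi q₂ b x y)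
      0 := by
  -- basic continuity facts
  have cb : Continuous b := hb.continuous
  have cdb : Continuous (deriv b) := hb.continuous_deriv (by simp)
  have cq1 : Continuous q₁ := hq₁.continuous
  have cq2 : Continuous q₂ := hq₂.continuous
  have cfd : Continuous (fderiv ℝ q₂) := hq₂.continuous_fderiv one_ne_zero
  -- bound on deriv b on [0,1]
  obtain ⟨M, hM⟩ : ∃ M, ∀ x ∈ Icc (0:ℝ) 1, ‖deriv b x‖ ≤ M :=
    isCompact_Icc.exists_bound_of_continuousOn cdb.continuousOn
  have hM0 : 0 ≤ M := le_trans (norm_nonneg _) (hM 0 (by norm_num))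
  set ε : ℝ := 1 / (2 * (M + 1)) with hε
  have hεpos : 0 < ε := by positivity
  have key : ∀ t ∈ Icc (-ε) ε, ∀ x ∈ Icc (0:ℝ) 1, (1:ℝ)/2 ≤ 1 + t * deriv b x := by
    intro t ht x hx
    have h1 : |t * deriv b x| ≤ ε * M := by
      rw [abs_mul]
      exact mul_le_mul (abs_le.2 ⟨ht.1, ht.2⟩)
        (by simpa using hM x hx) (abs_nonneg _) hεpos.le
    have h2 : ε * M ≤ 1/2 := by
      rw [hε, div_mul_eq_mul_div, one_mul, div_le_div_iff₀ (by positivity) (by norm_num)]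
      nlinarith
    have := (abs_le.1 (h1.trans h2)).1
    linarith
  -- positivity of square roots on the relevant region
  have sq_pos : ∀ t ∈ Icc (-ε) ε, ∀ x ∈ Icc (0:ℝ) 1,
      0 < Real.sqrt (1 + t * deriv b x) := by
    intro t ht x hx
    exact Real.sqrt_pos.2 (by linarith [key t ht x hx])
  -- the compact region in (t, p) space
  set K : Set (ℝ × ℝ × ℝ) := Icc (-ε) ε ×ˢ (Icc (0:ℝ) 1 ×ˢ Icc (0:ℝ) 1) with hK
  have hKc : IsCompact K := isCompact_Icc.prod (isCompact_Icc.prod isCompact_Icc)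
  -- continuity of the auxiliary pieces on the whole space
  have cpt : Continuous (fun z : ℝ × ℝ × ℝ =>
      (z.2.1 + z.1 * b z.2.1, z.2.2 + z.1 * b z.2.2)) := by fun_prop
  have cA : Continuous (fun z : ℝ × ℝ × ℝ =>
      q₂ (z.2.1 + z.1 * b z.2.1, z.2.2 + z.1 * b z.2.2)) := cq2.comp cpt
  have cA' : Continuous (fun z : ℝ × ℝ × ℝ =>
      fderiv ℝ q₂ (z.2.1 + z.1 * b z.2.1, z.2.2 + z.1 * b z.2.2) (b z.2.1, b z.2.2)) :=
    (cfd.comp cpt).clm_apply (by fun_prop)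
  have cs1 : Continuous (fun z : ℝ × ℝ × ℝ => Real.sqrt (1 + z.1 * deriv b z.2.1)) :=
    Real.continuous_sqrt.comp (by fun_prop)
  have cs2 : Continuous (fun z : ℝ × ℝ × ℝ => Real.sqrt (1 + z.1 * deriv b z.2.2)) :=
    Real.continuous_sqrt.comp (by fun_prop)
  have hGcont : Continuous (fun z : ℝ × ℝ × ℝ => Gq q₂ b z.1 z.2) :=
    (cA.mul cs1).mul cs2
  have hne1 : ∀ z ∈ K, (2 : ℝ) * Real.sqrt (1 + z.1 * deriv b z.2.1) ≠ 0 := by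
    intro z hz
    have := sq_pos z.1 hz.1 z.2.1 hz.2.1
    positivity
  have hne2 : ∀ z ∈ K, (2 : ℝ) * Real.sqrt (1 + z.1 * deriv b z.2.2) ≠ 0 := by
    intro z hz
    have := sq_pos z.1 hz.1 z.2.2 hz.2.2
    positivity
  have hGq'cont : ContinuousOn (fun z : ℝ × ℝ × ℝ => Gq' q₂ b z.1 z.2) K := by
    unfold Gq'
    apply ContinuousOn.add
    · apply ContinuousOn.mul _ cs2.continuousOn
      apply ContinuousOn.add ((cA'.mul cs1).continuousOn)
      exact cA.continuousOn.mul
        (((cdb.comp (continuous_fst.comp continuous_snd)).continuousOn).div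
          ((continuous_const.mul cs1).continuousOn) hne1)
    · exact ((cA.mul cs1).continuousOn).mul
        (((cdb.comp (continuous_snd.comp continuous_snd)).continuousOn).div
          ((continuous_const.mul cs2).continuousOn) hne2)
  have hF'cont : ContinuousOn (fun z : ℝ × ℝ × ℝ => Fq' q₁ q₂ b z.1 z.2) K := by
    unfold Fq'
    exact ((continuous_const.mul
      ((cq1.comp continuous_snd).sub hGcont)).continuousOn).mul hGq'cont
  obtain ⟨C, hC⟩ := hKc.exists_bound_of_continuousOn hF'cont
  -- the measure
  set μ1 : Measure ℝ := volume.restrict (Icc (0:ℝ) 1) with hμ1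
  set μ : Measure (ℝ × ℝ) := μ1.prod μ1 with hμ
  have hμeq : μ = volume.restrict (Icc (0:ℝ) 1 ×ˢ Icc (0:ℝ) 1) := by
    rw [hμ, hμ1, Measure.prod_restrict, ← Measure.volume_eq_prod]
  have hInt : ∀ f : ℝ × ℝ → ℝ, Continuous f → Integrable f μ := by
    intro f hf
    rw [hμeq]
    exact hf.continuousOn.integrableOn_compact (isCompact_Icc.prod isCompact_Icc)
  have hae : ∀ᵐ p ∂μ, p ∈ Icc (0:ℝ) 1 ×ˢ Icc (0:ℝ) 1 := by
    rw [hμeq]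
    exact ae_restrict_mem (measurableSet_Icc.prod measurableSet_Icc)
  -- value of Fq' at t = 0
  have hF'0 : Fq' q₁ q₂ b 0 = fun p : ℝ × ℝ =>
      -2 * ((q₁ p - q₂ p) * dPhi q₂ b p.1 p.2) := by
    funext p
    simp only [Fq', Gq, Gq', dPhi, zero_mul, add_zero, Real.sqrt_one, mul_one, one_mul]
    ring
  have cdPhi : Continuous (fun p : ℝ × ℝ => -2 * ((q₁ p - q₂ p) * dPhi q₂ b p.1 p.2)) := by
    unfold dPhi
    have h1 : Continuous (fun p : ℝ × ℝ => fderiv ℝ q₂ (p.1, p.2) (b p.1, b p.2)) :=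
      (cfd.comp (by fun_prop)).clm_apply (by fun_prop)
    fun_prop
  -- apply the dominated parametric differentiation theorem
  have main := hasDerivAt_integral_of_dominated_loc_of_deriv_le (μ := μ) (x₀ := (0:ℝ))
    (F := fun t p => Fq q₁ q₂ b t p) (F' := fun t p => Fq' q₁ q₂ b t p)
    (bound := fun _ => C) (Metric.ball_mem_nhds (0:ℝ) hεpos)
    (Filter.Eventually.of_forall fun t => by
      have : Continuous (Fq q₁ q₂ b t) := by unfold Fq Gq; fun_prop
      exact this.aestronglyMeasurable)
    (hInt _ (by
      have : Continuous (fun p : ℝ × ℝ => Fq q₁ q₂ b 0 p) := by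
        unfold Fq Gq
        fun_prop
      exact this))
    (by show AEStronglyMeasurable (Fq' q₁ q₂ b 0) μ
        rw [hF'0]; exact cdPhi.aestronglyMeasurable)
    (by
      filter_upwards [hae] with p hp
      intro t ht
      have hz : ((t, p) : ℝ × ℝ × ℝ) ∈ K :=
        ⟨⟨neg_le_of_abs_le (le_of_lt (by simpa [Real.dist_eq] using ht)),
          le_of_abs_le (le_of_lt (by simpa [Real.dist_eq] using ht))⟩, hp⟩
      exact hC (t, p) hz)
    (hInt _ continuous_const)
    (by
      filter_upwards [hae] with p hp
      intro t ht
      have ht' : t ∈ Icc (-ε) ε :=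
        ⟨neg_le_of_abs_le (le_of_lt (by simpa [Real.dist_eq] using ht)),
          le_of_abs_le (le_of_lt (by simpa [Real.dist_eq] using ht))⟩
      have h1 : (1:ℝ) + t * deriv b p.1 ≠ 0 := by
        have := key t ht' p.1 hp.1; linarith
      have h2 : (1:ℝ) + t * deriv b p.2 ≠ 0 := by
        have := key t ht' p.2 hp.2; linarith
      exact hasDerivAt_Fq q₁ q₂ hq₂ b t p h1 h2)
  have hder := main.2
  -- rewrite the function
  have hfun : (fun t : ℝ =>
      ∫ x in Set.Icc (0:ℝ) 1, ∫ y in Set.Icc (0:ℝ) 1,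
        (q₁ (x, y) -
          q₂ (x + t * b x, y + t * b y) *
            Real.sqrt (1 + t * deriv b x) * Real.sqrt (1 + t * deriv b y)) ^ 2)
      = fun t : ℝ => ∫ p, Fq q₁ q₂ b t p ∂μ := by
    funext t
    have hi : Integrable (Function.uncurry (fun x y : ℝ => Fq q₁ q₂ b t (x, y))) μ := by
      apply hInt
      unfold Fq Gq
      fun_prop
    exact integral_integral hi
  -- rewrite the value
  have hval : (∫ p, Fq' q₁ q₂ b 0 p ∂μ)
      = -2 * ∫ x in Set.Icc (0:ℝ) 1, ∫ y in Set.Icc (0:ℝ) 1,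
          (q₁ (x, y) - q₂ (x, y)) * dPhi q₂ b x y := by
    have hi : Integrable (Function.uncurry
        (fun x y : ℝ => (q₁ (x, y) - q₂ (x, y)) * dPhi q₂ b x y)) μ := by
      apply hInt
      unfold dPhi
      have h1 : Continuous (fun p : ℝ × ℝ => fderiv ℝ q₂ (p.1, p.2) (b p.1, b p.2)) :=
        (cfd.comp (by fun_prop)).clm_apply (by fun_prop)
      fun_prop
    calc (∫ p, Fq' q₁ q₂ b 0 p ∂μ)
        = ∫ p, -2 * ((q₁ p - q₂ p) * dPhi q₂ b p.1 p.2) ∂μ := by rw [← hF'0]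
      _ = -2 * ∫ p, (q₁ p - q₂ p) * dPhi q₂ b p.1 p.2 ∂μ := integral_const_mul _ _
      _ = -2 * ∫ x in Set.Icc (0:ℝ) 1, ∫ y in Set.Icc (0:ℝ) 1,
            (q₁ (x, y) - q₂ (x, y)) * dPhi q₂ b x y := by rw [integral_integral hi]
  rw [hfun, ← hval]
  exact hder
end

section
/- If q is C¹ on [0,1]² and b is smooth with b(0)=b(1)=0, then ∬_{[0,1]²} q(x,y)·[ ∂q/∂x(x,y)b(x) + ∂q/∂y(x,y)b(y) + (q(x,y)/2)(b'(x)+b'(y)) ] dx dy = 0; that is, the infinitesimal warping field dΦ_{id}(b) is L²-orthogonal to q, consistent with the action preserving the unit sphere. -/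
open MeasureTheory Set

/-- The infinitesimal warping field dΦ_{id}(b) is L²-orthogonal to q. -/
theorem dPhi_orthogonal_to_q
    (q : ℝ × ℝ → ℝ) (hq : ContDiff ℝ 1 q)
    (hq_unit : ∫ x in Set.Icc (0:ℝ) 1, ∫ y in Set.Icc (0:ℝ) 1, (q (x, y)) ^ 2 = 1)
    (b : ℝ → ℝ) (hb : ContDiff ℝ (⊤ : ℕ∞) b) (hb0 : b 0 = 0) (hb1 : b 1 = 0) :
    ∫ x in Set.Icc (0:ℝ) 1, ∫ y in Set.Icc (0:ℝ) 1,
      q (x, y) *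
        (fderiv ℝ q (x, y) (b x, b y) +
          q (x, y) / 2 * (deriv b x + deriv b y)) = 0 := by
  have hqc : Continuous q := hq.continuous
  have hbc : Continuous b := hb.continuous
  have hb'c : Continuous (deriv b) := hb.continuous_deriv (by simp)
  have hdc : Continuous (fun p => fderiv ℝ q p) := hq.continuous_fderiv one_ne_zero
  have hb' : ∀ t, HasDerivAt b (deriv b t) t :=
    fun t => ((hb.differentiable (by simp)) t).hasDerivAt
  set px : ℝ × ℝ → ℝ :=
    fun p => 2 * q p * (fderiv ℝ q p (1, 0)) * b p.1 + q p ^ 2 * deriv b p.1 with hpx_def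
  set py : ℝ × ℝ → ℝ :=
    fun p => 2 * q p * (fderiv ℝ q p (0, 1)) * b p.2 + q p ^ 2 * deriv b p.2 with hpy_def
  have hpx_cont : Continuous px := by
    apply Continuous.add
    · exact ((continuous_const.mul hqc).mul (hdc.clm_apply continuous_const)).mul
        (hbc.comp continuous_fst)
    · exact (hqc.pow 2).mul (hb'c.comp continuous_fst)
  have hpy_cont : Continuous py := by
    apply Continuous.add
    · exact ((continuous_const.mul hqc).mul (hdc.clm_apply continuous_const)).mul
        (hbc.comp continuous_snd)
    · exact (hqc.pow 2).mul (hb'c.comp continuous_snd)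
  -- derivative in x
  have hderx : ∀ y x : ℝ, HasDerivAt (fun t => q (t, y) ^ 2 * b t) (px (x, y)) x := by
    intro y x
    have hline : HasDerivAt (fun t : ℝ => (t, y)) ((1 : ℝ), (0 : ℝ)) x :=
      (hasDerivAt_id x).prodMk (hasDerivAt_const x y)
    have hqf : HasFDerivAt q (fderiv ℝ q (x, y)) (x, y) :=
      ((hq.differentiable one_ne_zero) (x, y)).hasFDerivAt
    have hcomp : HasDerivAt (fun t => q (t, y)) (fderiv ℝ q (x, y) (1, 0)) x :=
      hqf.comp_hasDerivAt x hline
    have := (hcomp.pow 2).mul (hb' x)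
    refine this.congr_deriv ?_
    simp [hpx_def]
  have hdery : ∀ x y : ℝ, HasDerivAt (fun t => q (x, t) ^ 2 * b t) (py (x, y)) y := by
    intro x y
    have hline : HasDerivAt (fun t : ℝ => (x, t)) ((0 : ℝ), (1 : ℝ)) y :=
      (hasDerivAt_const y x).prodMk (hasDerivAt_id y)
    have hqf : HasFDerivAt q (fderiv ℝ q (x, y)) (x, y) :=
      ((hq.differentiable one_ne_zero) (x, y)).hasFDerivAt
    have hcomp : HasDerivAt (fun t => q (x, t)) (fderiv ℝ q (x, y) (0, 1)) y :=
      hqf.comp_hasDerivAt y hline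
    have := (hcomp.pow 2).mul (hb' y)
    refine this.congr_deriv ?_
    simp [hpy_def]
  -- FTC: x-integral of px vanishes
  have hint_px : ∀ y : ℝ, ∫ x in Set.Icc (0:ℝ) 1, px (x, y) = 0 := by
    intro y
    rw [MeasureTheory.integral_Icc_eq_integral_Ioc,
      ← intervalIntegral.integral_of_le (zero_le_one' ℝ)]
    rw [intervalIntegral.integral_eq_sub_of_hasDerivAt
      (fun x _ => hderx y x)
      ((hpx_cont.comp (continuous_id.prodMk continuous_const)).intervalIntegrable 0 1)]
    simp [hb0, hb1]
  have hint_py : ∀ x : ℝ, ∫ y in Set.Icc (0:ℝ) 1, py (x, y) = 0 := by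
    intro x
    rw [MeasureTheory.integral_Icc_eq_integral_Ioc,
      ← intervalIntegral.integral_of_le (zero_le_one' ℝ)]
    rw [intervalIntegral.integral_eq_sub_of_hasDerivAt
      (fun y _ => hdery x y)
      ((hpy_cont.comp (continuous_const.prodMk continuous_id)).intervalIntegrable 0 1)]
    simp [hb0, hb1]
  -- pointwise identity
  have hpt : ∀ x y : ℝ,
      q (x, y) * (fderiv ℝ q (x, y) (b x, b y) +
        q (x, y) / 2 * (deriv b x + deriv b y)) = (px (x, y) + py (x, y)) / 2 := by
    intro x y
    have hsplit : fderiv ℝ q (x, y) (b x, b y) =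
        b x * fderiv ℝ q (x, y) (1, 0) + b y * fderiv ℝ q (x, y) (0, 1) := by
      have : (b x, b y) = b x • ((1:ℝ), (0:ℝ)) + b y • ((0:ℝ), (1:ℝ)) := by
        simp [Prod.ext_iff]
      rw [this, map_add, ContinuousLinearMap.map_smul, ContinuousLinearMap.map_smul,
        smul_eq_mul, smul_eq_mul]
    rw [hsplit]
    simp only [hpx_def, hpy_def]
    ring
  -- rewrite the double integral
  have hinner : ∀ x : ℝ,
      (∫ y in Set.Icc (0:ℝ) 1,
        q (x, y) * (fderiv ℝ q (x, y) (b x, b y) +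
          q (x, y) / 2 * (deriv b x + deriv b y)))
      = (∫ y in Set.Icc (0:ℝ) 1, px (x, y)) / 2 := by
    intro x
    have h1 : IntegrableOn (fun y => px (x, y)) (Set.Icc (0:ℝ) 1) :=
      (hpx_cont.comp (continuous_const.prodMk continuous_id)).integrableOn_Icc
    have h2 : IntegrableOn (fun y => py (x, y)) (Set.Icc (0:ℝ) 1) :=
      (hpy_cont.comp (continuous_const.prodMk continuous_id)).integrableOn_Icc
    calc (∫ y in Set.Icc (0:ℝ) 1,
        q (x, y) * (fderiv ℝ q (x, y) (b x, b y) +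
          q (x, y) / 2 * (deriv b x + deriv b y)))
        = ∫ y in Set.Icc (0:ℝ) 1, (px (x, y) + py (x, y)) / 2 := by
          exact integral_congr_ae (Filter.Eventually.of_forall (fun y => hpt x y))
      _ = ((∫ y in Set.Icc (0:ℝ) 1, px (x, y)) + ∫ y in Set.Icc (0:ℝ) 1, py (x, y)) / 2 := by
          rw [← integral_add h1 h2, integral_div]
      _ = (∫ y in Set.Icc (0:ℝ) 1, px (x, y)) / 2 := by rw [hint_py x, add_zero]
  calc (∫ x in Set.Icc (0:ℝ) 1, ∫ y in Set.Icc (0:ℝ) 1,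
      q (x, y) * (fderiv ℝ q (x, y) (b x, b y) +
        q (x, y) / 2 * (deriv b x + deriv b y)))
      = ∫ x in Set.Icc (0:ℝ) 1, (∫ y in Set.Icc (0:ℝ) 1, px (x, y)) / 2 := by
        exact integral_congr_ae (Filter.Eventually.of_forall (fun x => hinner x))
    _ = (∫ x in Set.Icc (0:ℝ) 1, ∫ y in Set.Icc (0:ℝ) 1, px (x, y)) / 2 := by
        rw [integral_div]
    _ = (∫ y in Set.Icc (0:ℝ) 1, ∫ x in Set.Icc (0:ℝ) 1, px (x, y)) / 2 := by
        congr 1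
        apply MeasureTheory.integral_integral_swap
        rw [Measure.prod_restrict]
        exact hpx_cont.continuousOn.integrableOn_compact (isCompact_Icc.prod isCompact_Icc)
    _ = 0 := by
        simp only [hint_px]
        simp
end
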